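/- For real β > 1 and γ > 0, ∑_{k=1}^∞ (σ_{-γ}(k)·σ_{-γ}(k·rad(k)) / σ_{-γ}(rad(k))) · k^{-β} = ζ(β)·ζ(β+γ)·ζ(β+2γ), where rad(k) is the product of distinct primes dividing k (rad(1)=1). -/

import Mathlib

noncomputable def sigmaNeg (γ : ℝ) (k : ℕ) : ℝ := ∑ d ∈ k.divisors, (d : ℝ) ^ (-γ)

def rad (k : ℕ) : ℕ := ∏ p ∈ k.primeFactors, p

/-!
Both sides are Dirichlet series of multiplicative functions: the right side is the L-series of
`ζ * n^{-γ} * n^{-2γ}`, and the left summand is multiplicative because `σ_{-γ}` is and `rad` is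
multiplicative on coprime arguments. So it suffices to compare them at prime powers `p^i`. With
`x = p^{-γ}` and `S m = 1 + x + ⋯ + x^(m-1)`, the left side is `S (i+1) * S (i+2) / (1 + x)` and
the right side is `∑_{a+b=i} S (a+1) * x^(2b)`; they agree by induction on `i`, using
`S (i+3) = 1 + x + x² S (i+1)`.
-/
open Finset ArithmeticFunction LSeries
open scoped ArithmeticFunction.zeta LSeries.notation

namespace ArithmeticFunction

theorem mul_apply_prime_pow {R : Type*} [Semiring R] (f g : ArithmeticFunction R) {p : ℕ}
    (hp : p.Prime) (i : ℕ) :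
    (f * g) (p ^ i) = ∑ ab ∈ antidiagonal i, f (p ^ ab.1) * g (p ^ ab.2) := by
  rw [mul_apply, Nat.sum_divisorsAntidiagonal (fun a b => f a * g b),
    Nat.sum_divisors_prime_pow hp,
    Nat.sum_antidiagonal_eq_sum_range_succ (fun a b => f (p ^ a) * g (p ^ b))]
  refine sum_congr rfl fun k hk => ?_
  rw [Nat.pow_div (Nat.lt_succ_iff.mp (mem_range.mp hk)) hp.pos]

noncomputable def rpowNeg (t : ℝ) : ArithmeticFunction ℝ :=
  ⟨fun n => if n = 0 then 0 else (n : ℝ) ^ (-t), if_pos rfl⟩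

theorem rpowNeg_apply (t : ℝ) {n : ℕ} (hn : n ≠ 0) : rpowNeg t n = (n : ℝ) ^ (-t) :=
  if_neg hn

theorem rpowNeg_zero : rpowNeg 0 = ζ := by
  ext n
  rcases eq_or_ne n 0 with rfl | hn
  · simp
  · simp [rpowNeg_apply _ hn, hn]

theorem isMultiplicative_rpowNeg (t : ℝ) : (rpowNeg t).IsMultiplicative := by
  refine IsMultiplicative.iff_ne_zero.mpr ⟨by simp [rpowNeg_apply], fun {m n} hm hn _ => ?_⟩
  rw [rpowNeg_apply _ (mul_ne_zero hm hn), rpowNeg_apply _ hm, rpowNeg_apply _ hn, Nat.cast_mul,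
    Real.mul_rpow m.cast_nonneg n.cast_nonneg]

theorem isMultiplicative_zeta_mul_rpowNeg (t : ℝ) :
    ((ζ : ArithmeticFunction ℝ) * rpowNeg t).IsMultiplicative :=
  isMultiplicative_zeta.natCast.mul (isMultiplicative_rpowNeg t)

theorem rpowNeg_prime_pow (t : ℝ) {p : ℕ} (hp : p.Prime) (k : ℕ) :
    rpowNeg t (p ^ k) = ((p : ℝ) ^ (-t)) ^ k := by
  rw [rpowNeg_apply _ (pow_ne_zero _ hp.ne_zero), Nat.cast_pow, ← Real.rpow_natCast,
    ← Real.rpow_mul p.cast_nonneg, mul_comm, Real.rpow_mul p.cast_nonneg, Real.rpow_natCast]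

theorem ofReal_mul_eq_convolution (f g : ArithmeticFunction ℝ) :
    (fun n => ((f * g) n : ℂ)) = (fun n => (f n : ℂ)) ⍟ (fun n => (g n : ℂ)) := by
  ext n
  simp [convolution_def, mul_apply]

theorem LSeriesHasSum_rpowNeg {s : ℂ} {t : ℝ} (h : 1 < s.re + t) :
    LSeriesHasSum (fun n => (rpowNeg t n : ℂ)) s (riemannZeta (s + t)) := by
  have hterm : term (fun n => (rpowNeg t n : ℂ)) s = term 1 (s + t) := by
    ext n
    rcases eq_or_ne n 0 with rfl | hn
    · simp
    · rw [term_of_ne_zero hn, term_of_ne_zero hn, rpowNeg_apply _ hn,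
        Complex.ofReal_cpow n.cast_nonneg, Complex.cpow_add _ _ (Nat.cast_ne_zero.mpr hn),
        Complex.ofReal_neg, Complex.cpow_neg, Pi.one_apply]
      push_cast
      field_simp
  rw [LSeriesHasSum, hterm]
  exact LSeriesHasSum_one (by simpa using h)

end ArithmeticFunction

theorem sigmaNeg_eq_zeta_mul_rpowNeg (γ : ℝ) (n : ℕ) :
    sigmaNeg γ n = ((ζ : ArithmeticFunction ℝ) * rpowNeg γ) n := by
  rw [coe_zeta_mul_apply]
  exact sum_congr rfl fun d hd => (rpowNeg_apply _ (Nat.pos_of_mem_divisors hd).ne').symm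

theorem sigmaNeg_mul_of_coprime (γ : ℝ) {m n : ℕ} (h : m.Coprime n) :
    sigmaNeg γ (m * n) = sigmaNeg γ m * sigmaNeg γ n := by
  simp only [sigmaNeg_eq_zeta_mul_rpowNeg]
  exact (isMultiplicative_zeta_mul_rpowNeg γ).map_mul_of_coprime h

theorem sigmaNeg_prime_pow (γ : ℝ) {p : ℕ} (hp : p.Prime) (k : ℕ) :
    sigmaNeg γ (p ^ k) = ∑ j ∈ range (k + 1), ((p : ℝ) ^ (-γ)) ^ j := by
  rw [sigmaNeg, Nat.sum_divisors_prime_pow hp]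
  refine sum_congr rfl fun j _ => ?_
  rw [← rpowNeg_apply _ (pow_ne_zero _ hp.ne_zero), rpowNeg_prime_pow _ hp]

theorem rad_one : rad 1 = 1 := by simp [rad]

theorem rad_dvd_self (n : ℕ) : rad n ∣ n := Nat.prod_primeFactors_dvd n

theorem rad_mul_of_coprime {m n : ℕ} (h : m.Coprime n) : rad (m * n) = rad m * rad n := by
  rw [rad, rad, rad, Nat.Coprime.primeFactors_mul h, prod_union h.disjoint_primeFactors]

theorem rad_prime_pow {p : ℕ} (hp : p.Prime) {k : ℕ} (hk : k ≠ 0) : rad (p ^ k) = p := by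
  rw [rad, Nat.primeFactors_pow _ hk, hp.primeFactors, prod_singleton]

theorem geom_sum_mul_geom_sum_succ {R : Type*} [CommSemiring R] (x : R) (i : ℕ) :
    (∑ j ∈ range (i + 1), x ^ j) * ∑ j ∈ range (i + 2), x ^ j = (1 + x) *
      ∑ ab ∈ antidiagonal i, (∑ j ∈ range (ab.1 + 1), x ^ j) * (x ^ 2) ^ ab.2 := by
  induction i with
  | zero => simp [sum_range_succ, add_comm]
  | succ i ih =>
    have hS : ∑ j ∈ range (i + 3), x ^ j = 1 + x + x ^ 2 * ∑ j ∈ range (i + 1), x ^ j := by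
      have hshift :
          ∑ j ∈ range (i + 1), x ^ (j + 1 + 1) = x ^ 2 * ∑ j ∈ range (i + 1), x ^ j := by
        rw [mul_sum]
        exact sum_congr rfl fun j _ => by ring
      rw [sum_range_succ', sum_range_succ', hshift]
      ring
    rw [Nat.sum_antidiagonal_succ']
    simp only [pow_succ (x ^ 2), ← mul_assoc, ← sum_mul, pow_zero, mul_one]
    rw [show i + 1 + 2 = i + 3 from rfl, hS]
    calc _ = (1 + x) * ∑ j ∈ range (i + 2), x ^ j +
          x ^ 2 * ((∑ j ∈ range (i + 1), x ^ j) * ∑ j ∈ range (i + 2), x ^ j) := by ring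
      _ = _ := by rw [ih]; ring

noncomputable def sigmaRadRatio (γ : ℝ) : ArithmeticFunction ℝ :=
  ⟨fun n => sigmaNeg γ n * sigmaNeg γ (n * rad n) / sigmaNeg γ (rad n), by simp [sigmaNeg]⟩

theorem sigmaRadRatio_apply (γ : ℝ) (n : ℕ) :
    sigmaRadRatio γ n = sigmaNeg γ n * sigmaNeg γ (n * rad n) / sigmaNeg γ (rad n) := rfl

theorem isMultiplicative_sigmaRadRatio (γ : ℝ) : (sigmaRadRatio γ).IsMultiplicative := by
  refine ⟨by simp [sigmaRadRatio_apply, rad_one, sigmaNeg], fun {m n} h => ?_⟩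
  have hm_radn : m.Coprime (rad n) := h.coprime_dvd_right (rad_dvd_self n)
  have hradm_n : (rad m).Coprime n := h.coprime_dvd_left (rad_dvd_self m)
  have hrad : (rad m).Coprime (rad n) := hradm_n.coprime_dvd_right (rad_dvd_self n)
  have hmul : (m * rad m).Coprime (n * rad n) :=
    (h.mul_right hm_radn).mul_left (hradm_n.mul_right hrad)
  rw [sigmaRadRatio_apply, sigmaRadRatio_apply, sigmaRadRatio_apply, rad_mul_of_coprime h,
    mul_mul_mul_comm, sigmaNeg_mul_of_coprime γ h, sigmaNeg_mul_of_coprime γ hmul,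
    sigmaNeg_mul_of_coprime γ hrad]
  ring

theorem sigmaRadRatio_eq (γ : ℝ) :
    sigmaRadRatio γ = (ζ : ArithmeticFunction ℝ) * rpowNeg γ * rpowNeg (2 * γ) := by
  refine (IsMultiplicative.eq_iff_eq_on_prime_powers _ (isMultiplicative_sigmaRadRatio γ) _
    ((isMultiplicative_zeta_mul_rpowNeg γ).mul (isMultiplicative_rpowNeg _))).mpr
    fun p i hp => ?_
  set x : ℝ := (p : ℝ) ^ (-γ)
  have hx : 0 < x := Real.rpow_pos_of_pos (Nat.cast_pos.mpr hp.pos) _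
  have hx2 : (p : ℝ) ^ (-(2 * γ)) = x ^ 2 := by
    rw [← Real.rpow_natCast, ← Real.rpow_mul p.cast_nonneg]
    ring_nf
  have hσp : sigmaNeg γ p = 1 + x := by
    simpa [sum_range_succ] using sigmaNeg_prime_pow γ hp 1
  rcases Nat.eq_zero_or_pos i with rfl | hi
  · simp [sigmaRadRatio_apply, rad_one, sigmaNeg, rpowNeg_apply]
  rw [sigmaRadRatio_apply, rad_prime_pow hp hi.ne', ← pow_succ, hσp,
    div_eq_iff (by positivity), sigmaNeg_prime_pow γ hp, sigmaNeg_prime_pow γ hp,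
    mul_apply_prime_pow _ _ hp]
  simp only [← sigmaNeg_eq_zeta_mul_rpowNeg, sigmaNeg_prime_pow γ hp, rpowNeg_prime_pow _ hp,
    hx2]
  rw [mul_comm _ (1 + x)]
  exact geom_sum_mul_geom_sum_succ x i

theorem stmt13 (β γ : ℝ) (hβ : 1 < β) (hγ : 0 < γ) :
    HasSum
      (fun k : ℕ+ =>
        ((sigmaNeg γ k * sigmaNeg γ (k * rad k) / sigmaNeg γ (rad k) : ℝ) : ℂ) *
          (k : ℂ) ^ (-(β : ℂ)))
      (riemannZeta β * riemannZeta (β + γ) * riemannZeta (β + 2 * γ)) := by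
  have hL {t : ℝ} (ht : 0 ≤ t) :
      LSeriesHasSum (fun n => (rpowNeg t n : ℂ)) β (riemannZeta (β + t)) :=
    LSeriesHasSum_rpowNeg (by simp only [Complex.ofReal_re]; linarith)
  have h := ((hL le_rfl).convolution (hL hγ.le)).convolution (hL (by positivity : 0 ≤ 2 * γ))
  rw [← ofReal_mul_eq_convolution, ← ofReal_mul_eq_convolution, rpowNeg_zero,
    ← sigmaRadRatio_eq] at h
  push_cast [add_zero] at h
  refine (hasSum_pnat_iff (f := term _ β).mpr (by rwa [term_zero, add_zero])).congr_fun
    fun k => ?_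
  rw [term_of_ne_zero k.ne_zero, Complex.cpow_neg, ← div_eq_mul_inv, sigmaRadRatio_apply]
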